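/- arXiv:2108.12163 — 2 statements merged into one kernel-verified Lean document; each statement's English description precedes it below -/
import Mathlib

section
/- Let 𝒯 ∈ 𝕄_r^{tt} with left orthogonal TT decomposition 𝒯 = [T₁,…,T_m], where TT rank is (r₁,…,r_{m−1}). Then the tensor nuclear norm satisfies ‖𝒯‖_* ≤ √(r₁r₂⋯r_{m−1}) · ‖𝒯‖_F. -/
open Matrix

noncomputable def frobNorm {ι κ : Type*} [Fintype ι] [Fintype κ] (A : Matrix ι κ ℝ) : ℝ :=
  Real.sqrt (∑ i, ∑ j, (A i j) ^ 2)

noncomputable def rowNorm {ι κ : Type*} [Fintype κ] (A : Matrix ι κ ℝ) (i : ι) : ℝ :=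
  Real.sqrt (∑ j, (A i j) ^ 2)

noncomputable def twoInfNorm {ι κ : Type*} [Fintype ι] [Fintype κ] (A : Matrix ι κ ℝ) : ℝ :=
  ⨆ i, rowNorm A i

noncomputable def linfNorm {ι κ : Type*} [Fintype ι] [Fintype κ] (A : Matrix ι κ ℝ) : ℝ :=
  ⨆ i, ⨆ j, |A i j|

noncomputable def opNorm {ι κ : Type*} [Fintype ι] [Fintype κ] (A : Matrix ι κ ℝ) : ℝ :=
  sSup {c : ℝ | ∃ x : κ → ℝ, (∑ j, (x j) ^ 2) ≤ 1 ∧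
    c = Real.sqrt (∑ i, (∑ j, A i j * x j) ^ 2)}

noncomputable def sigmaMinPos {ι κ : Type*} [Fintype ι] [Fintype κ] (A : Matrix ι κ ℝ) : ℝ :=
  sInf {c : ℝ | ∃ y : ι → ℝ, (∑ j, (Aᵀ.mulVec y j) ^ 2) = 1 ∧
    c = Real.sqrt (∑ i, (A.mulVec (Aᵀ.mulVec y) i) ^ 2)}

noncomputable def chordalDist {ι : Type*} [Fintype ι] {r : ℕ} (U V : Matrix ι (Fin r) ℝ) : ℝ :=
  sInf {c : ℝ | ∃ Q : Matrix (Fin r) (Fin r) ℝ, Qᵀ * Q = 1 ∧ c = frobNorm (U * Q - V)}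

noncomputable def incoh {ι κ : Type*} [Fintype ι] [Fintype κ] (A : Matrix ι κ ℝ) : ℝ :=
  Real.sqrt ((Fintype.card ι : ℝ) / (Fintype.card κ)) * twoInfNorm A

abbrev sepRow (d : ℕ → ℕ) (m i : ℕ) : Type :=
  (j : {j : Fin m // (j : ℕ) < i}) → Fin (d j.1)

abbrev sepCol (d : ℕ → ℕ) (m i : ℕ) : Type :=
  (j : {j : Fin m // ¬ (j : ℕ) < i}) → Fin (d j.1)

def sep {m : ℕ} (d : ℕ → ℕ) (T : ((j : Fin m) → Fin (d j)) → ℝ) (i : ℕ) :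
    Matrix (sepRow d m i) (sepCol d m i) ℝ :=
  Matrix.of fun a b => T fun j => if h : (j : ℕ) < i then a ⟨j, h⟩ else b ⟨j, h⟩

def mergeRow (d : ℕ → ℕ) (m i : ℕ) (w : sepRow d m i) (y : Fin (d i)) :
    sepRow d m (i + 1) := fun j =>
  if h : (j.1 : ℕ) < i then w ⟨j.1, h⟩
  else Fin.cast (congrArg d (by have h2 := j.2; omega)) y

def extendCol (d : ℕ → ℕ) (m i : ℕ) (y : Fin (d i)) (c : sepCol d m (i + 1)) :
    sepCol d m i := fun j =>
  if h : (j.1 : ℕ) = i then Fin.cast (congrArg d h.symm) y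
  else c ⟨j.1, by have h2 := j.2; omega⟩

def lastCol (d : ℕ → ℕ) (m : ℕ) (x : Fin (d (m - 1))) : sepCol d m (m - 1) :=
  fun j => Fin.cast (congrArg d (by have h2 := j.2; have h3 := j.1.2; omega)) x

def ttProd (r d : ℕ → ℕ) (C : (i : ℕ) → Fin (d i) → Matrix (Fin (r i)) (Fin (r (i + 1))) ℝ)
    {m : ℕ} (x : (j : Fin m) → Fin (d j)) :
    (k : ℕ) → k ≤ m → Matrix (Fin (r 0)) (Fin (r k)) ℝ
  | 0, _ => 1
  | k + 1, h => ttProd r d C x k (Nat.le_of_succ_le h) * C k (x ⟨k, h⟩)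

noncomputable def ttTensor (r d : ℕ → ℕ)
    (C : (i : ℕ) → Fin (d i) → Matrix (Fin (r i)) (Fin (r (i + 1))) ℝ) (m : ℕ) :
    ((j : Fin m) → Fin (d j)) → ℝ :=
  fun x => ∑ a, ∑ b, ttProd r d C x m le_rfl a b

noncomputable def tfrob {m : ℕ} {d : ℕ → ℕ} (T : ((j : Fin m) → Fin (d j)) → ℝ) : ℝ :=
  Real.sqrt (∑ x, (T x) ^ 2)

noncomputable def tNuclear {m : ℕ} {d : ℕ → ℕ} (T : ((j : Fin m) → Fin (d j)) → ℝ) : ℝ :=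
  sInf {s : ℝ | ∃ (k : ℕ) (c : Fin k → ℝ) (u : (l : Fin k) → (j : Fin m) → Fin (d j) → ℝ),
    (∀ l j, ∑ y, (u l j y) ^ 2 = 1) ∧
    (∀ x, T x = ∑ l, c l * ∏ j, u l j (x j)) ∧ s = ∑ l, |c l|}

/-!
Expanding the matrix products, `𝒯` is the sum over index paths `p = (p₀, …, p_m)` of the rank-one
tensors `⊗ⱼ Tⱼ(·)[pⱼ, pⱼ₊₁]`, of norms `c_p = ∏ⱼ ‖Tⱼ(·)[pⱼ, pⱼ₊₁]‖`. As `r₀ = r_m = 1` there are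
`r₁⋯r_{m-1}` paths, so Cauchy–Schwarz gives `‖𝒯‖_* ≤ ∑ c_p ≤ √(r₁⋯r_{m-1}) · (∑ c_p²)^{1/2}`.
Left orthogonality says that the matrices `(∑_y Tⱼ(y)[b, c]²)_{b,c}` have unit column sums for
`j < m - 1`, so the sum over paths telescopes to `∑ c_p² = ‖T_m‖_F²`; it also says that the left
unfoldings of the partial products are orthonormal, whence `‖𝒯‖_F = ‖T_m‖_F`.
-/

theorem sum_pi_snoc {n : ℕ} {M : Type*} [AddCommMonoid M] (β : Fin (n + 1) → Type*)
    [∀ i, Fintype (β i)] (F : (∀ i, β i) → M) :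
    ∑ a, F a = ∑ p : (∀ i : Fin n, β i.castSucc), ∑ y : β (Fin.last n), F (Fin.snoc p y) := by
  rw [← (Fin.snocEquiv β).sum_comp F, Fintype.sum_prod_type, Finset.sum_comm]
  rfl

theorem sq_sum_eq_sum_sq_of_subsingleton {R α : Type*} [Semiring R] [Fintype α] [Subsingleton α]
    (f : α → R) :
    (∑ a, f a) ^ 2 = ∑ a, f a ^ 2 := by
  cases isEmpty_or_nonempty α with
  | inl _ => simp
  | inr h => obtain ⟨a⟩ := h; simp [Fintype.sum_subsingleton _ a]

theorem exists_sum_sq_eq_one_and_mul_eq {κ : Type*} [Fintype κ] [Nonempty κ] (w : κ → ℝ) :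
    ∃ u : κ → ℝ, ∑ y, u y ^ 2 = 1 ∧ ∀ y, √(∑ z, w z ^ 2) * u y = w y := by
  classical
  have hs : 0 ≤ ∑ z, w z ^ 2 := Finset.sum_nonneg fun z _ => sq_nonneg _
  by_cases h : ∑ z, w z ^ 2 = 0
  · have hw : ∀ y, w y = 0 := fun y =>
      pow_eq_zero_iff two_ne_zero |>.mp <|
        (Finset.sum_eq_zero_iff_of_nonneg fun z _ => sq_nonneg (w z)).mp h y (Finset.mem_univ y)
    refine ⟨Pi.single (Classical.arbitrary κ) 1, ?_, fun y => by simp [hw]⟩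
    simp [Pi.single_apply, ite_pow]
  · have hpos : 0 < √(∑ z, w z ^ 2) := Real.sqrt_pos.mpr (lt_of_le_of_ne hs (Ne.symm h))
    refine ⟨fun y => w y / √(∑ z, w z ^ 2), ?_, fun y => mul_div_cancel₀ _ hpos.ne'⟩
    simp only [div_pow, Real.sq_sqrt hs, ← Finset.sum_div]
    exact div_self h

theorem tNuclear_le_sum_abs {m : ℕ} {d : ℕ → ℕ} {α : Type*} [Fintype α]
    {T : ((j : Fin m) → Fin (d j)) → ℝ} (c : α → ℝ) (u : α → (j : Fin m) → Fin (d j) → ℝ)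
    (hu : ∀ a j, ∑ y, u a j y ^ 2 = 1) (hT : ∀ x, T x = ∑ a, c a * ∏ j, u a j (x j)) :
    tNuclear T ≤ ∑ a, |c a| := by
  let e := (Fintype.equivFin α).symm
  refine csInf_le ⟨0, ?_⟩ ⟨Fintype.card α, c ∘ e, u ∘ e, fun l => hu (e l),
    fun x => (hT x).trans (e.sum_comp _).symm, (e.sum_comp _).symm⟩
  rintro s ⟨k, c, u, -, -, rfl⟩
  positivity

theorem tNuclear_le_sum_prod_sqrt {m : ℕ} {d : ℕ → ℕ} {α : Type*} [Fintype α]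
    {T : ((j : Fin m) → Fin (d j)) → ℝ} (v : α → (j : Fin m) → Fin (d j) → ℝ)
    (hT : ∀ x, T x = ∑ a, ∏ j, v a j (x j)) :
    tNuclear T ≤ ∑ a, ∏ j, √(∑ y, v a j y ^ 2) := by
  by_cases hd : ∀ j : Fin m, Nonempty (Fin (d j))
  · choose u hu hvu using fun a (j : Fin m) =>
      have := hd j; exists_sum_sq_eq_one_and_mul_eq (v a j)
    refine (tNuclear_le_sum_abs (fun a => ∏ j, √(∑ y, v a j y ^ 2)) u hu fun x => ?_).trans_eq ?_
    · rw [hT x]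
      refine Finset.sum_congr rfl fun a _ => ?_
      rw [← Finset.prod_mul_distrib]
      exact Finset.prod_congr rfl fun j _ => (hvu a j (x j)).symm
    · exact Finset.sum_congr rfl fun a _ =>
        abs_of_nonneg (Finset.prod_nonneg fun _ _ => Real.sqrt_nonneg _)
  · -- some mode is empty, so the empty decomposition represents `T`
    obtain ⟨j, hj⟩ := not_forall.mp hd
    refine (tNuclear_le_sum_abs (α := Fin 0) Fin.elim0 (fun l => l.elim0) (fun l => l.elim0)
      fun x => (hj ⟨x j⟩).elim).trans ?_
    simp only [Finset.univ_eq_empty, Finset.sum_empty]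
    positivity

section Paths

variable {R : Type*} [CommSemiring R]

def pathWeight {k : ℕ} {ι : Fin (k + 1) → Type*} (A : (j : Fin k) → ι j.castSucc → ι j.succ → R)
    (p : (i : Fin (k + 1)) → ι i) : R :=
  ∏ j, A j (p j.castSucc) (p j.succ)

theorem sum_pathWeight_zero {ι : Fin 1 → Type*} [∀ i, Fintype (ι i)]
    (A : (j : Fin 0) → ι j.castSucc → ι j.succ → R) (g : ι (Fin.last 0) → R) :
    ∑ p, pathWeight A p * g (p (Fin.last 0)) = ∑ b, g b := by
  rw [sum_pi_snoc]
  simp [pathWeight]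
  rfl

theorem sum_pathWeight_succ {k : ℕ} {ι : Fin (k + 2) → Type*} [∀ i, Fintype (ι i)]
    (A : (j : Fin (k + 1)) → ι j.castSucc → ι j.succ → R) (g : ι (Fin.last (k + 1)) → R) :
    ∑ p, pathWeight A p * g (p (Fin.last (k + 1))) =
      ∑ p : (i : Fin (k + 1)) → ι i.castSucc, pathWeight (fun j : Fin k => A j.castSucc) p *
        ∑ c, A (Fin.last k) (p (Fin.last k)) c * g c := by
  rw [sum_pi_snoc]
  refine Finset.sum_congr rfl fun p _ => ?_
  simp only [pathWeight, Fin.snoc_castSucc, Fin.snoc_last, Fin.prod_univ_castSucc,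
    Fin.succ_castSucc, Fin.succ_last, Finset.mul_sum, mul_assoc]

theorem sum_pathWeight_of_sum_eq_one {k : ℕ} {ι : Fin (k + 1) → Type*} [∀ i, Fintype (ι i)]
    (A : (j : Fin k) → ι j.castSucc → ι j.succ → R) (hA : ∀ j c, ∑ b, A j b c = 1)
    (g : ι (Fin.last k) → R) :
    ∑ p, pathWeight A p * g (p (Fin.last k)) = ∑ b, g b := by
  induction k with
  | zero => exact sum_pathWeight_zero A g
  | succ k ih =>
    rw [sum_pathWeight_succ]
    refine (ih (ι := fun i => ι i.castSucc) _ (fun j => hA j.castSucc)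
      fun b => ∑ c, A (Fin.last k) b c * g c).trans ?_
    rw [Finset.sum_comm]
    simp only [← Finset.sum_mul]
    exact Finset.sum_congr rfl fun c _ =>
      (congrArg (· * g c) (hA (Fin.last k) c)).trans (one_mul _)

end Paths

section TensorTrain

variable (r d : ℕ → ℕ) (T : (i : ℕ) → Fin (d i) → Matrix (Fin (r i)) (Fin (r (i + 1))) ℝ)

def ttPrefix : (k : ℕ) → ((j : Fin k) → Fin (d j)) → Matrix (Fin (r 0)) (Fin (r k)) ℝ
  | 0, _ => 1
  | k + 1, x => ttPrefix k (fun j => x j.castSucc) * T k (x (Fin.last k))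

theorem ttProd_eq_ttPrefix {m : ℕ} (x : (j : Fin m) → Fin (d j)) :
    ∀ (k : ℕ) (hk : k ≤ m), ttProd r d T x k hk = ttPrefix r d T k (fun j => x (Fin.castLE hk j))
  | 0, _ => rfl
  | k + 1, hk => by
    show ttProd r d T x k _ * T k (x ⟨k, hk⟩) = _
    rw [ttProd_eq_ttPrefix x k (Nat.le_of_succ_le hk)]
    rfl

theorem sum_ttPrefix_mul_eq_sum_pathWeight (k : ℕ) (x : (j : Fin k) → Fin (d j))
    (g : Fin (r k) → ℝ) :
    ∑ a, ∑ b, ttPrefix r d T k x a b * g b =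
      ∑ p : (i : Fin (k + 1)) → Fin (r i),
        pathWeight (fun j => T j (x j)) p * g (p (Fin.last k)) := by
  induction k with
  | zero =>
    refine Eq.trans ?_ (sum_pathWeight_zero (ι := fun i => Fin (r i)) _ g).symm
    simp [ttPrefix, Matrix.one_apply]
  | succ k ih =>
    refine Eq.trans ?_ <|
      (ih (fun j => x j.castSucc) fun c => ∑ b, T k (x (Fin.last k)) c b * g b).trans
        (sum_pathWeight_succ (ι := fun i => Fin (r i)) (fun j => T j (x j)) g).symm
    refine Finset.sum_congr rfl fun a _ => ?_
    simp only [ttPrefix, Matrix.mul_apply, Finset.sum_mul, Finset.mul_sum, mul_assoc]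
    exact Finset.sum_comm

theorem ttTensor_eq_sum_pathWeight {m : ℕ} (x : (j : Fin m) → Fin (d j)) :
    ttTensor r d T m x =
      ∑ p : (i : Fin (m + 1)) → Fin (r i), pathWeight (fun j => T j (x j)) p := by
  simpa [ttTensor, ttProd_eq_ttPrefix] using sum_ttPrefix_mul_eq_sum_pathWeight r d T m x 1

theorem sum_transpose_mul_ttPrefix_succ (k : ℕ) :
    ∑ x : (j : Fin (k + 1)) → Fin (d j), (ttPrefix r d T (k + 1) x)ᵀ * ttPrefix r d T (k + 1) x =
      ∑ y, (T k y)ᵀ * (∑ x, (ttPrefix r d T k x)ᵀ * ttPrefix r d T k x) * T k y := by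
  rw [sum_pi_snoc, Finset.sum_comm]
  refine Finset.sum_congr rfl fun y _ => ?_
  rw [Matrix.mul_sum, Matrix.sum_mul]
  refine Finset.sum_congr rfl fun x _ => ?_
  simp only [ttPrefix, Fin.snoc_castSucc, Fin.snoc_last, transpose_mul, Matrix.mul_assoc]

theorem sum_transpose_mul_ttPrefix_eq_one (k : ℕ)
    (hT : ∀ i < k, ∑ y, (T i y)ᵀ * T i y = 1) :
    ∑ x, (ttPrefix r d T k x)ᵀ * ttPrefix r d T k x = 1 := by
  induction k with
  | zero => simp [ttPrefix]
  | succ k ih =>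
    rw [sum_transpose_mul_ttPrefix_succ, ih fun i hi => hT i (by omega)]
    simpa using hT k k.lt_succ_self

def coreFiberSqNorm (j : ℕ) (b : Fin (r j)) (c : Fin (r (j + 1))) : ℝ := ∑ y, T j y b c ^ 2

theorem coreFiberSqNorm_nonneg (j : ℕ) (b : Fin (r j)) (c : Fin (r (j + 1))) :
    0 ≤ coreFiberSqNorm r d T j b c :=
  Finset.sum_nonneg fun _ _ => sq_nonneg _

theorem sum_coreFiberSqNorm_eq_one {j : ℕ} (hT : ∑ y, (T j y)ᵀ * T j y = 1) (c : Fin (r (j + 1))) :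
    ∑ b, coreFiberSqNorm r d T j b c = 1 := by
  have h := congrFun (congrFun hT c) c
  simp only [Matrix.sum_apply, Matrix.mul_apply, Matrix.transpose_apply, Matrix.one_apply_eq] at h
  rw [← h, Finset.sum_comm]
  simp only [coreFiberSqNorm, sq]

theorem sum_sq_ttTensor_succ {n : ℕ} (hr0 : r 0 = 1) (hrn : r (n + 1) = 1)
    (hT : ∀ i < n, ∑ y, (T i y)ᵀ * T i y = 1) :
    ∑ x, ttTensor r d T (n + 1) x ^ 2 = ∑ b, ∑ c, coreFiberSqNorm r d T n b c := by
  have : Subsingleton (Fin (r 0)) := by rw [hr0]; infer_instance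
  have : Subsingleton (Fin (r (n + 1))) := by rw [hrn]; infer_instance
  have hgram : ∑ x, (ttPrefix r d T (n + 1) x)ᵀ * ttPrefix r d T (n + 1) x =
      ∑ y, (T n y)ᵀ * T n y := by
    rw [sum_transpose_mul_ttPrefix_succ, sum_transpose_mul_ttPrefix_eq_one r d T n hT]
    simp
  -- as `r 0 = r (n + 1) = 1`, `ttTensor x ^ 2` is the trace of `Pᵀ * P` for `P = ttPrefix x`
  calc ∑ x, ttTensor r d T (n + 1) x ^ 2
      = ∑ c, (∑ x, (ttPrefix r d T (n + 1) x)ᵀ * ttPrefix r d T (n + 1) x) c c := by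
        simp only [ttTensor, ttProd_eq_ttPrefix, Fin.castLE_refl, sq_sum_eq_sum_sq_of_subsingleton]
        simp only [Matrix.sum_apply, Matrix.mul_apply, Matrix.transpose_apply, sq]
        conv_rhs => rw [Finset.sum_comm]
        exact Finset.sum_congr rfl fun _ _ => Finset.sum_comm
    _ = ∑ b, ∑ c, coreFiberSqNorm r d T n b c := by
        rw [hgram]
        simp only [coreFiberSqNorm, Matrix.sum_apply, Matrix.mul_apply, Matrix.transpose_apply, sq]
        conv_rhs => rw [Finset.sum_comm]
        exact Finset.sum_congr rfl fun _ _ => Finset.sum_comm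

theorem sum_pathWeight_coreFiberSqNorm_succ {n : ℕ} (hT : ∀ i < n, ∑ y, (T i y)ᵀ * T i y = 1) :
    ∑ p : (i : Fin (n + 2)) → Fin (r i), pathWeight (fun j => coreFiberSqNorm r d T j) p =
      ∑ b, ∑ c, coreFiberSqNorm r d T n b c := by
  have h := (sum_pathWeight_succ (ι := fun i => Fin (r i))
    (fun (j : Fin (n + 1)) => coreFiberSqNorm r d T j) fun _ => 1).trans
    (sum_pathWeight_of_sum_eq_one (ι := fun i => Fin (r i)) _
      (fun j => sum_coreFiberSqNorm_eq_one r d T (hT j j.2))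
      fun b => ∑ c, coreFiberSqNorm r d T n b c * 1)
  simpa using h

theorem sum_pathWeight_coreFiberSqNorm_eq_sum_sq_ttTensor {m : ℕ} (hr0 : r 0 = 1) (hrm : r m = 1)
    (hT : ∀ i < m - 1, ∑ y, (T i y)ᵀ * T i y = 1) :
    ∑ p : (i : Fin (m + 1)) → Fin (r i), pathWeight (fun j => coreFiberSqNorm r d T j) p =
      ∑ x, ttTensor r d T m x ^ 2 := by
  cases m with
  | zero => simp [pathWeight, ttTensor, ttProd, Matrix.one_apply, hr0]
  | succ n =>
    exact (sum_pathWeight_coreFiberSqNorm_succ r d T hT).trans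
      (sum_sq_ttTensor_succ r d T hr0 hrm hT).symm

end TensorTrain

theorem card_pi_fin_eq_prod_Ico {m : ℕ} {r : ℕ → ℕ} (hr0 : r 0 = 1) (hrm : r m = 1) :
    Fintype.card ((i : Fin (m + 1)) → Fin (r i)) = ∏ i ∈ Finset.Ico 1 m, r i := by
  rw [Fintype.card_pi]
  simp only [Fintype.card_fin]
  rw [Fin.prod_univ_eq_prod_range (fun i => r i), Finset.prod_range_succ, hrm, mul_one]
  cases m with
  | zero => simp
  | succ n => rw [Finset.range_eq_Ico, Finset.prod_eq_prod_Ico_succ_bot n.succ_pos, hr0, one_mul]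

/-- for `𝒯 ∈ 𝕄_r^{tt}` with a left orthogonal TT decomposition and TT rank
`(r₁,…,r_{m−1})`, the tensor nuclear norm satisfies `‖𝒯‖_* ≤ √(r₁⋯r_{m−1})·‖𝒯‖_F`. -/
theorem stmt9 {m : ℕ} (d r : ℕ → ℕ) (hr0 : r 0 = 1) (hrm : r m = 1)
    (T : (i : ℕ) → Fin (d i) → Matrix (Fin (r i)) (Fin (r (i + 1))) ℝ)
    (hOrth : ∀ i, i < m - 1 → ∑ x : Fin (d i), (T i x)ᵀ * T i x = 1) :
    tNuclear (ttTensor r d T m) ≤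
      Real.sqrt (∏ i ∈ Finset.Ico 1 m, (r i : ℝ)) * tfrob (ttTensor r d T m) := by
  set w : ((i : Fin (m + 1)) → Fin (r i)) → ℝ := pathWeight (fun j => coreFiberSqNorm r d T j)
  have hw : ∀ p, 0 ≤ w p := fun p =>
    Finset.prod_nonneg fun j _ => coreFiberSqNorm_nonneg r d T _ _ _
  calc tNuclear (ttTensor r d T m)
      ≤ ∑ p : (i : Fin (m + 1)) → Fin (r i),
          ∏ j : Fin m, √(coreFiberSqNorm r d T j (p j.castSucc) (p j.succ)) :=
        tNuclear_le_sum_prod_sqrt _ (ttTensor_eq_sum_pathWeight r d T)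
    _ = ∑ p, √1 * √(w p) := by
        refine Finset.sum_congr rfl fun p _ => ?_
        rw [Real.sqrt_one, one_mul]
        exact (Real.sqrt_prod _ fun j _ => coreFiberSqNorm_nonneg r d T _ _ _).symm
    _ ≤ √(∑ p : (i : Fin (m + 1)) → Fin (r i), 1) * √(∑ p, w p) :=
        Real.sum_sqrt_mul_sqrt_le _ (fun _ => zero_le_one) hw
    _ = √(∏ i ∈ Finset.Ico 1 m, (r i : ℝ)) * tfrob (ttTensor r d T m) := by
        rw [sum_pathWeight_coreFiberSqNorm_eq_sum_sq_ttTensor r d T hr0 hrm hOrth, Finset.sum_const,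
          Finset.card_univ, card_pi_fin_eq_prod_Ico hr0 hrm]
        simp [tfrob]
end

section
/- Let 𝒯* ∈ 𝕄_r^{tt} be a low TT-rank tensor with spikiness Spiki(𝒯*) ≤ ν. Then its incoherence satisfies Incoh(𝒯*) ≤ ν·κ₀, where κ₀ is the condition number of 𝒯*, defined as the ratio of the largest singular value over all separations to the smallest nonzero singular value over all separations. -/
open Matrix

/-!
Fix a separation `A = 𝒯*⟨i⟩ = U S Vᵀ` with `U`, `V` orthonormal and `S` invertible, and let
`σ = sigmaMinPos A`; testing its defining infimum on `y = U (Sᵀ)⁻¹ q` gives `σ ‖q‖ ≤ ‖S q‖`, and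
for invertible `S` the same bound holds for `Sᵀ`. Hence for every row `k` of `U`,
`σ ‖U_k‖ ≤ ‖Sᵀ U_kᵀ‖ = ‖A_k‖ ≤ √#cols · ‖A‖_∞ ≤ ν ‖A‖_F / √#rows`, using `#rows · #cols = d₁⋯d_m`.
Since `‖A‖_F² = ‖S‖_F² ≤ rᵢ ‖A‖²`, this gives `(#rows / rᵢ) ‖U_k‖² ≤ ν² ‖A‖² / σ² ≤ ν² κ₀²`.
The columns of `V` are handled in the same way with `S` in place of `Sᵀ`.
-/

section DotProduct

variable {ι κ : Type*} [Fintype ι] [Fintype κ]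

lemma sum_sq_eq_dotProduct_self (v : ι → ℝ) : ∑ j, v j ^ 2 = v ⬝ᵥ v := by
  simp only [dotProduct, sq]

lemma dotProduct_self_nonneg (v : ι → ℝ) : 0 ≤ v ⬝ᵥ v := by
  rw [← sum_sq_eq_dotProduct_self]
  positivity

lemma smul_dotProduct_smul_self (c : ℝ) (v : ι → ℝ) : c • v ⬝ᵥ c • v = c ^ 2 * (v ⬝ᵥ v) := by
  rw [smul_dotProduct, dotProduct_smul, smul_eq_mul, smul_eq_mul, ← mul_assoc, sq]

lemma dotProduct_sq_le (v w : ι → ℝ) : (v ⬝ᵥ w) ^ 2 ≤ (v ⬝ᵥ v) * (w ⬝ᵥ w) := by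
  simpa only [dotProduct, sq] using Finset.sum_mul_sq_le_sq_mul_sq Finset.univ v w

lemma mulVec_dotProduct_self_of_orthonormal [DecidableEq κ] {V : Matrix ι κ ℝ}
    (hV : Vᵀ * V = 1) (q : κ → ℝ) : V *ᵥ q ⬝ᵥ V *ᵥ q = q ⬝ᵥ q := by
  rw [dotProduct_mulVec, ← vecMul_transpose, vecMul_vecMul, hV, vecMul_one]

end DotProduct

section Frobenius

variable {ι κ : Type*} [Fintype ι] [Fintype κ]

lemma frobNorm_sq (M : Matrix ι κ ℝ) : frobNorm M ^ 2 = ∑ i, M i ⬝ᵥ M i := by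
  rw [frobNorm, Real.sq_sqrt (by positivity)]
  simp only [sum_sq_eq_dotProduct_self]

lemma frobNorm_transpose (M : Matrix ι κ ℝ) : frobNorm Mᵀ = frobNorm M := by
  rw [frobNorm, frobNorm, Finset.sum_comm]
  rfl

lemma mulVec_dotProduct_self_le (M : Matrix ι κ ℝ) (v : κ → ℝ) :
    M *ᵥ v ⬝ᵥ M *ᵥ v ≤ frobNorm M ^ 2 * (v ⬝ᵥ v) := by
  rw [frobNorm_sq, Finset.sum_mul, dotProduct]
  exact Finset.sum_le_sum fun i _ => by simpa only [mulVec, sq] using dotProduct_sq_le (M i) v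

lemma frobNorm_mul_transpose_of_orthonormal {n : ℕ} (M : Matrix ι (Fin n) ℝ)
    {V : Matrix κ (Fin n) ℝ} (hV : Vᵀ * V = 1) : frobNorm (M * Vᵀ) = frobNorm M := by
  have hrow : ∀ i, (M * Vᵀ) i = V *ᵥ M i := fun i => by
    ext j
    simp only [mul_apply, transpose_apply, mulVec, dotProduct, mul_comm]
  simp only [frobNorm, sum_sq_eq_dotProduct_self, hrow, mulVec_dotProduct_self_of_orthonormal hV]

lemma frobNorm_orthonormal_mul {n : ℕ} {U : Matrix ι (Fin n) ℝ} (hU : Uᵀ * U = 1)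
    (M : Matrix (Fin n) κ ℝ) : frobNorm (U * M) = frobNorm M := by
  rw [← frobNorm_transpose, transpose_mul, frobNorm_mul_transpose_of_orthonormal _ hU,
    frobNorm_transpose]

end Frobenius

section OpNorm

variable {ι κ : Type*} [Fintype ι] [Fintype κ]

lemma opNorm_eq_sSup (A : Matrix ι κ ℝ) :
    opNorm A = sSup {c | ∃ x, x ⬝ᵥ x ≤ 1 ∧ c = √(A *ᵥ x ⬝ᵥ A *ᵥ x)} := by
  simp only [opNorm, sum_sq_eq_dotProduct_self]
  rfl

lemma opNorm_set_bddAbove (A : Matrix ι κ ℝ) :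
    BddAbove {c | ∃ x, x ⬝ᵥ x ≤ 1 ∧ c = √(A *ᵥ x ⬝ᵥ A *ᵥ x)} := by
  refine ⟨frobNorm A, ?_⟩
  rintro _ ⟨x, hx, rfl⟩
  calc √(A *ᵥ x ⬝ᵥ A *ᵥ x) ≤ √(frobNorm A ^ 2 * 1) :=
        Real.sqrt_le_sqrt ((mulVec_dotProduct_self_le A x).trans
          (mul_le_mul_of_nonneg_left hx (sq_nonneg _)))
    _ = frobNorm A := by
        rw [mul_one, Real.sqrt_sq (show 0 ≤ frobNorm A from Real.sqrt_nonneg _)]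

lemma sqrt_mulVec_dotProduct_self_le_opNorm (A : Matrix ι κ ℝ) {x : κ → ℝ}
    (hx : x ⬝ᵥ x ≤ 1) : √(A *ᵥ x ⬝ᵥ A *ᵥ x) ≤ opNorm A := by
  rw [opNorm_eq_sSup]
  exact le_csSup (opNorm_set_bddAbove A) ⟨x, hx, rfl⟩

lemma opNorm_nonneg (A : Matrix ι κ ℝ) : 0 ≤ opNorm A := by
  simpa using sqrt_mulVec_dotProduct_self_le_opNorm A (x := 0) (by simp)

end OpNorm

section SigmaMinPos

variable {ι κ : Type*} [Fintype ι] [Fintype κ]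

lemma sigmaMinPos_eq_sInf (A : Matrix ι κ ℝ) :
    sigmaMinPos A = sInf {c | ∃ y, Aᵀ *ᵥ y ⬝ᵥ Aᵀ *ᵥ y = 1 ∧
      c = √(A *ᵥ (Aᵀ *ᵥ y) ⬝ᵥ A *ᵥ (Aᵀ *ᵥ y))} := by
  simp only [sigmaMinPos, sum_sq_eq_dotProduct_self]

lemma sigmaMinPos_nonneg (A : Matrix ι κ ℝ) : 0 ≤ sigmaMinPos A := by
  rw [sigmaMinPos_eq_sInf]
  exact Real.sInf_nonneg fun _ ⟨_, _, hc⟩ => hc ▸ Real.sqrt_nonneg _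

lemma sigmaMinPos_zero : sigmaMinPos (0 : Matrix ι κ ℝ) = 0 := by
  simp [sigmaMinPos_eq_sInf]

lemma sigmaMinPos_sq_mul_le (A : Matrix ι κ ℝ) (y : ι → ℝ) :
    sigmaMinPos A ^ 2 * (Aᵀ *ᵥ y ⬝ᵥ Aᵀ *ᵥ y) ≤ A *ᵥ (Aᵀ *ᵥ y) ⬝ᵥ A *ᵥ (Aᵀ *ᵥ y) := by
  obtain ht | ht := (dotProduct_self_nonneg (Aᵀ *ᵥ y)).eq_or_lt
  · rw [← ht, mul_zero]
    exact dotProduct_self_nonneg _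
  set t := Aᵀ *ᵥ y ⬝ᵥ Aᵀ *ᵥ y
  set R := A *ᵥ (Aᵀ *ᵥ y) ⬝ᵥ A *ᵥ (Aᵀ *ᵥ y)
  have hc : (√t)⁻¹ ^ 2 = t⁻¹ := by rw [inv_pow, Real.sq_sqrt ht.le]
  have hmem : √(R / t) ∈ {c | ∃ y, Aᵀ *ᵥ y ⬝ᵥ Aᵀ *ᵥ y = 1 ∧
      c = √(A *ᵥ (Aᵀ *ᵥ y) ⬝ᵥ A *ᵥ (Aᵀ *ᵥ y))} := by
    refine ⟨(√t)⁻¹ • y, ?_, ?_⟩ <;> rw [mulVec_smul]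
    · rw [smul_dotProduct_smul_self, hc, inv_mul_cancel₀ ht.ne']
    · rw [mulVec_smul, smul_dotProduct_smul_self, hc, inv_mul_eq_div]
  have hle : sigmaMinPos A ≤ √(R / t) := by
    rw [sigmaMinPos_eq_sInf]
    exact csInf_le ⟨0, fun _ ⟨_, _, hc⟩ => hc ▸ Real.sqrt_nonneg _⟩ hmem
  rwa [Real.le_sqrt (sigmaMinPos_nonneg A) (div_nonneg (dotProduct_self_nonneg _) ht.le),
    le_div_iff₀ ht] at hle

end SigmaMinPos

/-- With `z = S⁻¹ w`: `‖w‖² = ⟨Sᵀ w, z⟩ ≤ ‖Sᵀ w‖ ‖z‖` and `c ‖z‖² ≤ ‖S z‖² = ‖w‖²`. -/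
lemma mul_dotProduct_le_transpose_of_isUnit {n : ℕ} {S : Matrix (Fin n) (Fin n) ℝ}
    (hS : IsUnit S) {c : ℝ} (h : ∀ q, c * (q ⬝ᵥ q) ≤ S *ᵥ q ⬝ᵥ S *ᵥ q) (w : Fin n → ℝ) :
    c * (w ⬝ᵥ w) ≤ Sᵀ *ᵥ w ⬝ᵥ Sᵀ *ᵥ w := by
  set z := S⁻¹ *ᵥ w
  have hz : S *ᵥ z = w := by
    rw [mulVec_mulVec, mul_nonsing_inv _ ((isUnit_iff_isUnit_det S).mp hS), one_mulVec]
  have hw : w ⬝ᵥ w = Sᵀ *ᵥ w ⬝ᵥ z := by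
    nth_rewrite 2 [← hz]
    rw [dotProduct_mulVec, mulVec_transpose]
  have hcz : c * (z ⬝ᵥ z) ≤ w ⬝ᵥ w := hz ▸ h z
  have hR := dotProduct_self_nonneg (Sᵀ *ᵥ w)
  rcases le_or_gt c 0 with hc | hc
  · exact (mul_nonpos_of_nonpos_of_nonneg hc (dotProduct_self_nonneg w)).trans hR
  rcases (dotProduct_self_nonneg w).eq_or_lt with hW | hW
  · rw [← hW, mul_zero]
    exact hR
  refine le_of_mul_le_mul_left ?_ hW
  calc w ⬝ᵥ w * (c * (w ⬝ᵥ w)) = c * (Sᵀ *ᵥ w ⬝ᵥ z) ^ 2 := by rw [← hw]; ring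
    _ ≤ c * ((Sᵀ *ᵥ w ⬝ᵥ Sᵀ *ᵥ w) * (z ⬝ᵥ z)) :=
        mul_le_mul_of_nonneg_left (dotProduct_sq_le _ _) hc.le
    _ = (Sᵀ *ᵥ w ⬝ᵥ Sᵀ *ᵥ w) * (c * (z ⬝ᵥ z)) := by ring
    _ ≤ (Sᵀ *ᵥ w ⬝ᵥ Sᵀ *ᵥ w) * (w ⬝ᵥ w) := mul_le_mul_of_nonneg_left hcz hR
    _ = w ⬝ᵥ w * (Sᵀ *ᵥ w ⬝ᵥ Sᵀ *ᵥ w) := mul_comm _ _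

section Factorization

variable {ι κ : Type*} {n : ℕ} {A : Matrix ι κ ℝ}
  {U : Matrix ι (Fin n) ℝ} {S : Matrix (Fin n) (Fin n) ℝ} {V : Matrix κ (Fin n) ℝ}

lemma transpose_of_factor (hA : A = U * S * Vᵀ) : Aᵀ = V * Sᵀ * Uᵀ := by
  rw [hA, transpose_mul, transpose_mul, transpose_transpose, Matrix.mul_assoc]

lemma row_eq_of_factor (hA : A = U * S * Vᵀ) (k : ι) : A k = V *ᵥ (Sᵀ *ᵥ U k) := by
  rw [hA, mul_apply_eq_vecMul, mul_apply_eq_vecMul, vecMul_transpose, ← vecMul_transpose Sᵀ,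
    transpose_transpose]

lemma mulVec_mulVec_of_factor [Fintype κ] (hV : Vᵀ * V = 1) (hA : A = U * S * Vᵀ)
    (q : Fin n → ℝ) : A *ᵥ (V *ᵥ q) = U *ᵥ (S *ᵥ q) := by
  rw [hA, mulVec_mulVec, Matrix.mul_assoc, hV, Matrix.mul_one, mulVec_mulVec]

lemma mul_dotProduct_row_le_of_factor [Fintype κ] (hV : Vᵀ * V = 1) (hA : A = U * S * Vᵀ)
    {c : ℝ} (h : ∀ q, c * (q ⬝ᵥ q) ≤ Sᵀ *ᵥ q ⬝ᵥ Sᵀ *ᵥ q) (k : ι) :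
    c * (U k ⬝ᵥ U k) ≤ A k ⬝ᵥ A k := by
  rw [row_eq_of_factor hA, mulVec_dotProduct_self_of_orthonormal hV]
  exact h _

lemma exists_transpose_mulVec_eq_of_factor [Fintype ι] (hU : Uᵀ * U = 1) (hS : IsUnit S)
    (hA : A = U * S * Vᵀ) (q : Fin n → ℝ) : ∃ y, Aᵀ *ᵥ y = V *ᵥ q := by
  have hSt : IsUnit Sᵀ.det := by
    rw [det_transpose]
    exact (isUnit_iff_isUnit_det S).mp hS
  refine ⟨U *ᵥ ((Sᵀ)⁻¹ *ᵥ q), ?_⟩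
  rw [transpose_of_factor hA, mulVec_mulVec, mulVec_mulVec, Matrix.mul_assoc (V * Sᵀ),
    hU, Matrix.mul_one, Matrix.mul_assoc, mul_nonsing_inv _ hSt, Matrix.mul_one]

variable [Fintype ι] [Fintype κ]

lemma factor_eq_zero_iff (hU : Uᵀ * U = 1) (hV : Vᵀ * V = 1) (hS : IsUnit S)
    (hA : A = U * S * Vᵀ) : A = 0 ↔ n = 0 := by
  constructor
  · intro h0
    by_contra hn
    have : Nonempty (Fin n) := ⟨⟨0, Nat.pos_of_ne_zero hn⟩⟩
    have hS0 : S = 0 := by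
      calc S = (Uᵀ * U) * S * (Vᵀ * V) := by rw [hU, hV, Matrix.one_mul, Matrix.mul_one]
        _ = Uᵀ * A * V := by simp only [hA, Matrix.mul_assoc]
        _ = 0 := by rw [h0, Matrix.mul_zero, Matrix.zero_mul]
    exact not_isUnit_zero (hS0 ▸ hS)
  · rintro rfl
    ext a b
    simp [hA]

lemma sigmaMinPos_sq_mul_le_of_factor (hU : Uᵀ * U = 1) (hV : Vᵀ * V = 1) (hS : IsUnit S)
    (hA : A = U * S * Vᵀ) (q : Fin n → ℝ) :
    sigmaMinPos A ^ 2 * (q ⬝ᵥ q) ≤ S *ᵥ q ⬝ᵥ S *ᵥ q := by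
  obtain ⟨y, hy⟩ := exists_transpose_mulVec_eq_of_factor hU hS hA q
  have h := sigmaMinPos_sq_mul_le A y
  rwa [hy, mulVec_mulVec_of_factor hV hA, mulVec_dotProduct_self_of_orthonormal hV,
    mulVec_dotProduct_self_of_orthonormal hU] at h

lemma sigmaMinPos_sq_mul_row_le_of_factor (hU : Uᵀ * U = 1)
    (hV : Vᵀ * V = 1) (hS : IsUnit S) (hA : A = U * S * Vᵀ) (k : ι) :
    sigmaMinPos A ^ 2 * (U k ⬝ᵥ U k) ≤ A k ⬝ᵥ A k :=
  mul_dotProduct_row_le_of_factor hV hA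
    (mul_dotProduct_le_transpose_of_isUnit hS (sigmaMinPos_sq_mul_le_of_factor hU hV hS hA)) k

lemma sigmaMinPos_sq_mul_col_le_of_factor (hU : Uᵀ * U = 1)
    (hV : Vᵀ * V = 1) (hS : IsUnit S) (hA : A = U * S * Vᵀ) (b : κ) :
    sigmaMinPos A ^ 2 * (V b ⬝ᵥ V b) ≤ Aᵀ b ⬝ᵥ Aᵀ b :=
  mul_dotProduct_row_le_of_factor hU (transpose_of_factor hA)
    (by simpa only [transpose_transpose] using sigmaMinPos_sq_mul_le_of_factor hU hV hS hA) b

lemma sigmaMinPos_pos_of_factor (hU : Uᵀ * U = 1) (hV : Vᵀ * V = 1) (hS : IsUnit S)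
    (hA : A = U * S * Vᵀ) (hn : n ≠ 0) : 0 < sigmaMinPos A := by
  -- `‖g‖ ≤ ‖S⁻¹‖_F ‖S g‖`; the `+ 1` avoids having to show `S⁻¹ ≠ 0`.
  set f := frobNorm S⁻¹ ^ 2
  have hlow : ∀ g, g ⬝ᵥ g = 1 → (f + 1)⁻¹ ≤ S *ᵥ g ⬝ᵥ S *ᵥ g := by
    intro g hg
    have h := mulVec_dotProduct_self_le S⁻¹ (S *ᵥ g)
    rw [mulVec_mulVec, nonsing_inv_mul _ ((isUnit_iff_isUnit_det S).mp hS), one_mulVec,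
      hg] at h
    rw [inv_le_iff_one_le_mul₀ (by positivity)]
    nlinarith [dotProduct_self_nonneg (S *ᵥ g)]
  let e : Fin n → ℝ := Pi.single ⟨0, Nat.pos_of_ne_zero hn⟩ 1
  obtain ⟨y₀, hy₀⟩ := exists_transpose_mulVec_eq_of_factor hU hS hA e
  rw [sigmaMinPos_eq_sInf]
  refine (Real.sqrt_pos.2 (inv_pos.2 (by positivity : 0 < f + 1))).trans_le (le_csInf ?_ ?_)
  · refine ⟨_, y₀, ?_, rfl⟩
    rw [hy₀, mulVec_dotProduct_self_of_orthonormal hV]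
    simp [e]
  rintro _ ⟨y, hy, rfl⟩
  have hAy : Aᵀ *ᵥ y = V *ᵥ (Sᵀ *ᵥ (Uᵀ *ᵥ y)) := by
    rw [transpose_of_factor hA, mulVec_mulVec, mulVec_mulVec]
  rw [hAy, mulVec_dotProduct_self_of_orthonormal hV] at hy
  rw [hAy, mulVec_mulVec_of_factor hV hA, mulVec_dotProduct_self_of_orthonormal hU]
  exact Real.sqrt_le_sqrt (hlow _ hy)

lemma frobNorm_sq_le_of_factor (hU : Uᵀ * U = 1) (hV : Vᵀ * V = 1) (hA : A = U * S * Vᵀ) :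
    frobNorm A ^ 2 ≤ n * opNorm A ^ 2 := by
  have hAS : frobNorm A = frobNorm S := by
    rw [hA, frobNorm_mul_transpose_of_orthonormal _ hV, frobNorm_orthonormal_mul hU]
  rw [hAS, ← frobNorm_transpose, frobNorm_sq]
  calc ∑ q, Sᵀ q ⬝ᵥ Sᵀ q ≤ ∑ _q : Fin n, opNorm A ^ 2 := Finset.sum_le_sum fun q _ => ?_
    _ = n * opNorm A ^ 2 := by simp
  have h := sqrt_mulVec_dotProduct_self_le_opNorm A (x := V *ᵥ Pi.single q 1)
    (by rw [mulVec_dotProduct_self_of_orthonormal hV]; simp)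
  rwa [mulVec_mulVec_of_factor hV hA, mulVec_dotProduct_self_of_orthonormal hU,
    mulVec_single_one, Real.sqrt_le_left (opNorm_nonneg A)] at h

end Factorization

section Spikiness

variable {ι κ : Type*} [Fintype ι] [Fintype κ]

lemma card_mul_row_le_of_spiky {A : Matrix ι κ ℝ} {ν : ℝ}
    (h : ∀ a b, √(Fintype.card ι * Fintype.card κ) * |A a b| ≤ ν * frobNorm A) (k : ι) :
    Fintype.card ι * (A k ⬝ᵥ A k) ≤ (ν * frobNorm A) ^ 2 := by
  rcases isEmpty_or_nonempty κ with hκ | hκ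
  · simp [dotProduct]
    positivity
  have hκpos : (0 : ℝ) < Fintype.card κ := by exact_mod_cast Fintype.card_pos
  have hentry : ∀ b, Fintype.card ι * A k b ^ 2 ≤ (ν * frobNorm A) ^ 2 / Fintype.card κ := by
    intro b
    have hb := pow_le_pow_left₀ (by positivity) (h k b) 2
    rw [mul_pow, Real.sq_sqrt (by positivity), sq_abs] at hb
    rw [le_div_iff₀ hκpos]
    linarith
  calc Fintype.card ι * (A k ⬝ᵥ A k) = ∑ b, Fintype.card ι * A k b ^ 2 := by
        rw [← sum_sq_eq_dotProduct_self, Finset.mul_sum]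
    _ ≤ ∑ _b : κ, (ν * frobNorm A) ^ 2 / Fintype.card κ := Finset.sum_le_sum fun b _ => hentry b
    _ = (ν * frobNorm A) ^ 2 := by
        rw [Finset.sum_const, Finset.card_univ, nsmul_eq_mul, mul_div_cancel₀ _ hκpos.ne']

lemma incoh_le_of_forall_row {W : Matrix ι κ ℝ} {B : ℝ} (hB : 0 ≤ B)
    (h : ∀ k, Fintype.card ι / Fintype.card κ * (W k ⬝ᵥ W k) ≤ B ^ 2) : incoh W ≤ B := by
  rw [incoh, twoInfNorm, Real.mul_iSup_of_nonneg (Real.sqrt_nonneg _)]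
  refine Real.iSup_le (fun k => ?_) hB
  rw [rowNorm, sum_sq_eq_dotProduct_self, ← Real.sqrt_mul (by positivity),
    Real.sqrt_le_left hB]
  exact h k

theorem incoh_le_of_spiky {n : ℕ} {A : Matrix ι κ ℝ} {U : Matrix ι (Fin n) ℝ}
    {S : Matrix (Fin n) (Fin n) ℝ} {V : Matrix κ (Fin n) ℝ} (hU : Uᵀ * U = 1) (hV : Vᵀ * V = 1)
    (hS : IsUnit S) (hA : A = U * S * Vᵀ) (hn : n ≠ 0) {ν : ℝ} (hν : 0 ≤ ν)
    (hspiky : ∀ a b, √(Fintype.card ι * Fintype.card κ) * |A a b| ≤ ν * frobNorm A) :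
    incoh U ≤ ν * (opNorm A / sigmaMinPos A) ∧ incoh V ≤ ν * (opNorm A / sigmaMinPos A) := by
  have hσ := sigmaMinPos_pos_of_factor hU hV hS hA hn
  have hn' : (0 : ℝ) < n := by exact_mod_cast Nat.pos_of_ne_zero hn
  have hF := frobNorm_sq_le_of_factor hU hV hA
  have hB : 0 ≤ ν * (opNorm A / sigmaMinPos A) := by
    have := opNorm_nonneg A
    positivity
  have row_bound : ∀ c x y : ℝ, 0 ≤ c → sigmaMinPos A ^ 2 * x ≤ y →
      c * y ≤ (ν * frobNorm A) ^ 2 → c / n * x ≤ (ν * (opNorm A / sigmaMinPos A)) ^ 2 := by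
    intro c x y hc hxy hcy
    rw [div_mul_eq_mul_div, div_le_iff₀ hn', mul_pow, div_pow, mul_div_assoc',
      div_mul_eq_mul_div, le_div_iff₀ (by positivity)]
    calc c * x * sigmaMinPos A ^ 2 ≤ c * y := by
          rw [mul_assoc]
          exact mul_le_mul_of_nonneg_left (by linarith) hc
      _ ≤ (ν * frobNorm A) ^ 2 := hcy
      _ ≤ ν ^ 2 * opNorm A ^ 2 * n := by
          rw [mul_pow, mul_assoc]
          exact mul_le_mul_of_nonneg_left (by linarith) (sq_nonneg ν)
  have hspiky' : ∀ b a, √(Fintype.card κ * Fintype.card ι) * |Aᵀ b a| ≤ ν * frobNorm Aᵀ := by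
    intro b a
    rw [mul_comm (Fintype.card κ : ℝ), frobNorm_transpose]
    exact hspiky a b
  refine ⟨incoh_le_of_forall_row hB fun k => ?_, incoh_le_of_forall_row hB fun b => ?_⟩
  · rw [Fintype.card_fin]
    exact row_bound _ _ _ (Nat.cast_nonneg _)
      (sigmaMinPos_sq_mul_row_le_of_factor hU hV hS hA k) (card_mul_row_le_of_spiky hspiky k)
  · rw [Fintype.card_fin]
    refine row_bound _ _ _ (Nat.cast_nonneg _)
      (sigmaMinPos_sq_mul_col_le_of_factor hU hV hS hA b) ?_
    simpa only [frobNorm_transpose] using card_mul_row_le_of_spiky hspiky' b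

end Spikiness

section Separation

variable {m : ℕ} (d : ℕ → ℕ) (T : ((j : Fin m) → Fin (d j)) → ℝ) (i : ℕ)

abbrev sepEquiv : ((j : Fin m) → Fin (d j)) ≃ sepRow d m i × sepCol d m i :=
  Equiv.piEquivPiSubtypeProd _ _

lemma sep_apply_sepEquiv (x : (j : Fin m) → Fin (d j)) :
    sep d T i (sepEquiv d i x).1 (sepEquiv d i x).2 = T x :=
  congrArg T ((sepEquiv d i).symm_apply_apply x)

lemma sum_sq_sep : ∑ a, ∑ b, sep d T i a b ^ 2 = ∑ x, T x ^ 2 := by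
  rw [← Fintype.sum_prod_type', ← (sepEquiv d i).sum_comp]
  simp only [sep_apply_sepEquiv]

lemma frobNorm_sep : frobNorm (sep d T i) = tfrob T := by
  rw [frobNorm, tfrob, sum_sq_sep]

lemma card_sepRow_mul_card_sepCol :
    (Fintype.card (sepRow d m i) : ℝ) * Fintype.card (sepCol d m i) =
      ∏ j ∈ Finset.range m, (d j : ℝ) := by
  rw [← Nat.cast_mul, ← Fintype.card_prod, ← Fintype.card_congr (sepEquiv d i), Fintype.card_pi,
    ← Fin.prod_univ_eq_prod_range (fun j => (d j : ℝ)) m]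
  simp

lemma sep_eq_zero_iff : sep d T i = 0 ↔ T = 0 := by
  constructor
  · intro h
    ext x
    rw [← sep_apply_sepEquiv d T i x, h]
    rfl
  · rintro rfl
    rfl

variable {d T}

lemma sep_spiky {ν : ℝ}
    (hSpiki : ∀ x, √(∏ j ∈ Finset.range m, (d j : ℝ)) * |T x| ≤ ν * tfrob T)
    (a : sepRow d m i) (b : sepCol d m i) :
    √(Fintype.card (sepRow d m i) * Fintype.card (sepCol d m i)) * |sep d T i a b| ≤
      ν * frobNorm (sep d T i) := by
  rw [card_sepRow_mul_card_sepCol, frobNorm_sep]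
  exact hSpiki _

lemma nonneg_of_spiky {ν : ℝ} (hT : T ≠ 0)
    (hSpiki : ∀ x, √(∏ j ∈ Finset.range m, (d j : ℝ)) * |T x| ≤ ν * tfrob T) : 0 ≤ ν := by
  obtain ⟨x, hx⟩ := Function.ne_iff.1 hT
  have hF : 0 < tfrob T := by
    refine Real.sqrt_pos.2 ((pow_pos (abs_pos.2 hx) 2).trans_le ?_)
    rw [sq_abs]
    exact Finset.single_le_sum (fun y _ => sq_nonneg (T y)) (Finset.mem_univ x)
  exact nonneg_of_mul_nonneg_left ((by positivity : (0:ℝ) ≤ _).trans (hSpiki x)) hF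

end Separation

section IndexRange

variable {f g : ℕ → ℝ} {a b i : ℕ}

lemma finite_setOf_exists_Icc (f : ℕ → ℝ) (a b : ℕ) :
    {c | ∃ j : ℕ, a ≤ j ∧ j ≤ b ∧ c = f j}.Finite :=
  ((Set.finite_Icc a b).image f).subset fun _ ⟨j, h₁, h₂, hc⟩ => ⟨j, ⟨h₁, h₂⟩, hc.symm⟩

lemma sInf_setOf_exists_Icc_le (h₁ : a ≤ i) (h₂ : i ≤ b) :
    sInf {c | ∃ j, a ≤ j ∧ j ≤ b ∧ c = g j} ≤ g i :=
  csInf_le (finite_setOf_exists_Icc g a b).bddBelow ⟨i, h₁, h₂, rfl⟩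

lemma le_sSup_setOf_exists_Icc (h₁ : a ≤ i) (h₂ : i ≤ b) :
    f i ≤ sSup {c | ∃ j, a ≤ j ∧ j ≤ b ∧ c = f j} :=
  le_csSup (finite_setOf_exists_Icc f a b).bddAbove ⟨i, h₁, h₂, rfl⟩

lemma div_le_sSup_div_sInf (h₁ : a ≤ i) (h₂ : i ≤ b) (hf : 0 ≤ f i)
    (hg : ∀ j, a ≤ j → j ≤ b → 0 < g j) :
    f i / g i ≤ sSup {c | ∃ j, a ≤ j ∧ j ≤ b ∧ c = f j} /
      sInf {c | ∃ j, a ≤ j ∧ j ≤ b ∧ c = g j} := by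
  have hmem : sInf {c | ∃ j, a ≤ j ∧ j ≤ b ∧ c = g j} ∈ {c | ∃ j, a ≤ j ∧ j ≤ b ∧ c = g j} :=
    Set.Nonempty.csInf_mem ⟨_, i, h₁, h₂, rfl⟩ (finite_setOf_exists_Icc g a b)
  obtain ⟨j, hj₁, hj₂, hj⟩ := hmem
  have hfi := le_sSup_setOf_exists_Icc (f := f) h₁ h₂
  exact div_le_div₀ (hf.trans hfi) hfi (hj ▸ hg j hj₁ hj₂) (sInf_setOf_exists_Icc_le h₁ h₂)

end IndexRange

/-- spikiness implies incoherence. If `Spiki(𝒯*) ≤ ν`, i.e.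
`√(d₁⋯d_m)·‖𝒯*‖_{ℓ∞} ≤ ν‖𝒯*‖_F`, then for each separation `𝒯*⟨i⟩ = Uᵢ Sᵢ Vᵢᵀ`
(orthonormal `Uᵢ, Vᵢ`, invertible `Sᵢ`, `i = 1,…,m−1`) the incoherences of `Uᵢ` and
`Vᵢ` are bounded by `ν·κ₀`, where `κ₀ = σ̄(𝒯*)/σ̲(𝒯*)` is the condition number. -/
theorem stmt11 {m : ℕ} (d r : ℕ → ℕ) (ν : ℝ)
    (T : ((j : Fin m) → Fin (d j)) → ℝ)
    (U : (i : ℕ) → Matrix (sepRow d m i) (Fin (r i)) ℝ)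
    (S : (i : ℕ) → Matrix (Fin (r i)) (Fin (r i)) ℝ)
    (V : (i : ℕ) → Matrix (sepCol d m i) (Fin (r i)) ℝ)
    (hU : ∀ i, 1 ≤ i → i ≤ m - 1 → (U i)ᵀ * U i = 1)
    (hV : ∀ i, 1 ≤ i → i ≤ m - 1 → (V i)ᵀ * V i = 1)
    (hS : ∀ i, 1 ≤ i → i ≤ m - 1 → IsUnit (S i))
    (hfact : ∀ i, 1 ≤ i → i ≤ m - 1 → sep d T i = U i * S i * (V i)ᵀ)
    (hSpiki : ∀ x, Real.sqrt (∏ j ∈ Finset.range m, (d j : ℝ)) * |T x| ≤ ν * tfrob T)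
    (σmax σmin : ℝ)
    (hσmax : σmax = sSup {c : ℝ | ∃ i, 1 ≤ i ∧ i ≤ m - 1 ∧ c = opNorm (sep d T i)})
    (hσmin : σmin = sInf {c : ℝ | ∃ i, 1 ≤ i ∧ i ≤ m - 1 ∧ c = sigmaMinPos (sep d T i)}) :
    ∀ i, 1 ≤ i → i ≤ m - 1 →
      incoh (U i) ≤ ν * (σmax / σmin) ∧ incoh (V i) ≤ ν * (σmax / σmin) := by
  intro i hi₁ hi₂
  have hr : ∀ i, 1 ≤ i → i ≤ m - 1 → (r i = 0 ↔ T = 0) := fun i h₁ h₂ =>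
    (factor_eq_zero_iff (hU i h₁ h₂) (hV i h₁ h₂) (hS i h₁ h₂) (hfact i h₁ h₂)).symm.trans
      (sep_eq_zero_iff d T i)
  by_cases hT : T = 0
  · -- Both sides vanish: `r i = 0` and `σmin = 0`, and division by zero gives zero.
    have hσmin₀ : σmin = 0 := by
      refine le_antisymm ?_ (hσmin ▸ Real.sInf_nonneg ?_)
      · simpa [← hσmin, (sep_eq_zero_iff d T i).2 hT, sigmaMinPos_zero] using
          sInf_setOf_exists_Icc_le (g := fun j => sigmaMinPos (sep d T j)) hi₁ hi₂
      · rintro _ ⟨j, -, -, rfl⟩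
        exact sigmaMinPos_nonneg _
    simp [incoh, (hr i hi₁ hi₂).2 hT, hσmin₀]
  have hκ : opNorm (sep d T i) / sigmaMinPos (sep d T i) ≤ σmax / σmin :=
    hσmax ▸ hσmin ▸ div_le_sSup_div_sInf (f := fun j => opNorm (sep d T j)) hi₁ hi₂
      (opNorm_nonneg _) fun j hj₁ hj₂ =>
      sigmaMinPos_pos_of_factor (hU j hj₁ hj₂) (hV j hj₁ hj₂) (hS j hj₁ hj₂) (hfact j hj₁ hj₂)
        ((hr j hj₁ hj₂).not.2 hT)
  have hν := nonneg_of_spiky hT hSpiki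
  obtain ⟨hUi, hVi⟩ := incoh_le_of_spiky (hU i hi₁ hi₂) (hV i hi₁ hi₂) (hS i hi₁ hi₂)
    (hfact i hi₁ hi₂) ((hr i hi₁ hi₂).not.2 hT) hν (sep_spiky i hSpiki)
  exact ⟨hUi.trans (by gcongr), hVi.trans (by gcongr)⟩
end
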